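/- Let φ : R_A → R_B be a graded ring isomorphism that is k-stable, let ℓ := ht(φ(x_{k+1})), assume ℓ > k+1, and assume p := b_{ℓ,ℓ−1} is even. Then the element v := (p/2) y_{ℓ−1} ∈ F_{ℓ−1}(B) satisfies v(β_ℓ − v) = 0 in R_B. -/
import Mathlib


open MvPolynomial

namespace Bott

/-- A square integer matrix indexed by `Fin n` (rows, columns).  We think of it as the
matrix `A = (a_{ij})` defining a Bott tower; strict lower triangularity is the
predicate `SLT` below. -/
abbrev Mat (n : ℕ) := Fin n → Fin n → ℤ

/-- `a` is strictly lower triangular: `a i j = 0` unless `j < i`. -/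
def SLT {n : ℕ} (a : Mat n) : Prop := ∀ i j : Fin n, a i j ≠ 0 → (j : ℕ) < (i : ℕ)

section Defs

variable (n : ℕ)

/-- The linear form `α_i = ∑_{j<i} a_{ij} x_j` (the terms with `j ≥ i` vanish for a
strictly lower triangular matrix). -/
noncomputable def alpha (a : Mat n) (i : Fin n) : MvPolynomial (Fin n) ℤ :=
  ∑ j, C (a i j) * X j

/-- The ideal `(x_i² − α_i x_i : 1 ≤ i ≤ n)`. -/
noncomputable def bottIdeal (a : Mat n) : Ideal (MvPolynomial (Fin n) ℤ) :=
  Ideal.span (Set.range fun i : Fin n => X i ^ 2 - alpha n a i * X i)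

/-- The Bott ring `R_A = ℤ[x_1,…,x_n]/(x_i² − α_i x_i)`. -/
abbrev BRing (a : Mat n) := MvPolynomial (Fin n) ℤ ⧸ bottIdeal n a

/-- Quotient projection onto the Bott ring. -/
noncomputable def bmk (a : Mat n) : MvPolynomial (Fin n) ℤ →+* BRing n a :=
  Ideal.Quotient.mk _

/-- The class `x_i` in the Bott ring (0-based: `bx a i` is the paper's `x_{i+1}`). -/
noncomputable def bx (a : Mat n) (i : Fin n) : BRing n a := bmk n a (X i)

/-- The class of `α_i` in the Bott ring. -/
noncomputable def bal (a : Mat n) (i : Fin n) : BRing n a := bmk n a (alpha n a i)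

/-- `F_k(A)`: the span of the first `k` degree-2 generators (paper's `x_1, …, x_k`,
0-based indices `< k`). -/
noncomputable def F (a : Mat n) (k : ℕ) : Submodule ℤ (BRing n a) :=
  Submodule.span ℤ (bx n a '' {i : Fin n | (i : ℕ) < k})

/-- `H²(A)`: the span of all the degree-2 generators. -/
noncomputable def H2 (a : Mat n) : Submodule ℤ (BRing n a) :=
  Submodule.span ℤ (Set.range (bx n a))

/-- `ht(η) = min {k | η ∈ F_k(A)}`. -/
noncomputable def ht (a : Mat n) (η : BRing n a) : ℕ := sInf {k | η ∈ F n a k}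

/-- A ring isomorphism between Bott rings is graded iff it preserves the degree-2
components in both directions (both rings are generated in degree 2, so this is
equivalent to preserving the whole grading). -/
def IsGraded (a b : Mat n) (φ : BRing n a ≃+* BRing n b) : Prop :=
  (∀ z ∈ H2 n a, φ z ∈ H2 n b) ∧ (∀ z ∈ H2 n b, φ.symm z ∈ H2 n a)

/-- `φ` is `k`-stable: `φ(F_k(A)) ⊆ F_k(B)`. -/
def IsStable (a b : Mat n) (k : ℕ) (φ : BRing n a ≃+* BRing n b) : Prop :=
  ∀ z ∈ F n a k, φ z ∈ F n b k

/-! ### Rationalizations -/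

/-- The linear form `α_i` with rational coefficients. -/
noncomputable def alphaQ (a : Mat n) (i : Fin n) : MvPolynomial (Fin n) ℚ :=
  ∑ j, C ((a i j : ℚ)) * X j

noncomputable def bottIdealQ (a : Mat n) : Ideal (MvPolynomial (Fin n) ℚ) :=
  Ideal.span (Set.range fun i : Fin n => X i ^ 2 - alphaQ n a i * X i)

/-- The rationalized Bott ring `R_A ⊗ ℚ`. -/
abbrev BRingQ (a : Mat n) := MvPolynomial (Fin n) ℚ ⧸ bottIdealQ n a

noncomputable def bmkQ (a : Mat n) : MvPolynomial (Fin n) ℚ →+* BRingQ n a :=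
  Ideal.Quotient.mk _

noncomputable def bxQ (a : Mat n) (i : Fin n) : BRingQ n a := bmkQ n a (X i)

noncomputable def balQ (a : Mat n) (i : Fin n) : BRingQ n a := bmkQ n a (alphaQ n a i)

/-- `F_k(A) ⊗ ℚ` inside `R_A ⊗ ℚ`. -/
noncomputable def FQ (a : Mat n) (k : ℕ) : Submodule ℚ (BRingQ n a) :=
  Submodule.span ℚ (bxQ n a '' {i : Fin n | (i : ℕ) < k})

/-- The canonical map `R_A → R_A ⊗ ℚ`. -/
noncomputable def toQ (a : Mat n) : BRing n a →+* BRingQ n a :=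
  Ideal.Quotient.lift (bottIdeal n a)
    ((bmkQ n a).comp (MvPolynomial.map (Int.castRingHom ℚ)))
    (by
      intro p hp
      have hmap : ∀ i : Fin n,
          MvPolynomial.map (Int.castRingHom ℚ) (alpha n a i) = alphaQ n a i := by
        intro i
        simp [alpha, alphaQ, map_sum]
      have h : bottIdeal n a ≤
          Ideal.comap (MvPolynomial.map (Int.castRingHom ℚ)) (bottIdealQ n a) := by
        rw [bottIdeal, Ideal.span_le]
        rintro _ ⟨i, rfl⟩
        simp only [SetLike.mem_coe, Ideal.mem_comap, map_sub, map_mul, map_pow,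
          MvPolynomial.map_X, hmap]
        exact Ideal.subset_span ⟨i, rfl⟩
      rw [RingHom.comp_apply]
      exact Ideal.Quotient.eq_zero_iff_mem.mpr (h hp))

/-- The truncated linear form `β̄_ℓ` (rational version): for a 0-based row index `li`,
this is `∑_{k ≤ j < li} b_{li,j} y_j`, i.e. the paper's `β_ℓ` with its terms in
`F_k(B)` removed. -/
noncomputable def bbarQ (b : Mat n) (k : ℕ) (li : Fin n) : BRingQ n b :=
  ∑ j ∈ Finset.univ.filter (fun j : Fin n => k ≤ (j : ℕ) ∧ j < li),
    (b li j : ℚ) • bxQ n b j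

/-- Half of the truncated linear form `β̄_ℓ / 2` (meaningful when all relevant entries
are even), as an element of the integral Bott ring. -/
noncomputable def bbarHalf (b : Mat n) (k : ℕ) (li : Fin n) : BRing n b :=
  ∑ j ∈ Finset.univ.filter (fun j : Fin n => k ≤ (j : ℕ) ∧ j < li),
    (b li j / 2) • bx n b j

/-! ### Switching and twisting -/

/-- The matrix obtained from `b` by exchanging the rows and columns `p` and `q`. -/
def swapMat (b : Mat n) (p q : Fin n) : Mat n :=
  fun i j => b (Equiv.swap p q i) (Equiv.swap p q j)

/-- `g : R_C → R_{C'}` is a switching isomorphism: for some `j` (0-based `J`) with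
`c_{j+1,j} = 0`, `C'` is obtained from `C` by exchanging the `j`-th and `(j+1)`-st rows
and columns, and `g` swaps the `j`-th and `(j+1)`-st generators and fixes the others. -/
def IsSwitch (c c' : Mat n) (g : BRing n c ≃+* BRing n c') : Prop :=
  IsGraded n c c' g ∧
  ∃ (J : ℕ) (hJ : J + 1 < n),
    c ⟨J + 1, hJ⟩ ⟨J, by omega⟩ = 0 ∧
    c' = swapMat n c ⟨J, by omega⟩ ⟨J + 1, hJ⟩ ∧
    ∀ i, g (bx n c i) = bx n c' (Equiv.swap (⟨J, by omega⟩ : Fin n) ⟨J + 1, hJ⟩ i)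

/-- `g : R_C → R_{C'}` is a twisting isomorphism: for some `j` (0-based `J`) and
`v ∈ F_{j−1}(C)` with `v(γ_j − v) = 0`, the rows of `C'` before `j` agree with those of
`C`, `γ'_j = γ_j − 2v`, and `g` is a graded isomorphism fixing the first `j−1`
generators. -/
def IsTwist (c c' : Mat n) (g : BRing n c ≃+* BRing n c') : Prop :=
  IsGraded n c c' g ∧
  ∃ (J : ℕ) (hJ : J < n) (v : BRing n c),
    v ∈ F n c J ∧ v * (bal n c ⟨J, hJ⟩ - v) = 0 ∧
    (∀ i : Fin n, (i : ℕ) < J → ∀ m, c' i m = c i m) ∧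
    ((∑ m, c' ⟨J, hJ⟩ m • bx n c m) = bal n c ⟨J, hJ⟩ - 2 • v) ∧
    (∀ i : Fin n, (i : ℕ) < J → g (bx n c i) = bx n c' i)

/-- `IsMoveComp n c c' g` : `g : R_C → R_{C'}` is a finite (possibly empty) composition
of switching and twisting isomorphisms. -/
inductive IsMoveComp : ∀ c c' : Mat n, (BRing n c ≃+* BRing n c') → Prop
  | refl (c : Mat n) : IsMoveComp c c (RingEquiv.refl _)
  | switch {c c' c'' : Mat n} {g : BRing n c ≃+* BRing n c'}
      {g' : BRing n c' ≃+* BRing n c''} :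
      IsMoveComp c c' g → IsSwitch n c' c'' g' → IsMoveComp c c'' (g.trans g')
  | twist {c c' c'' : Mat n} {g : BRing n c ≃+* BRing n c'}
      {g' : BRing n c' ≃+* BRing n c''} :
      IsMoveComp c c' g → IsTwist n c' c'' g' → IsMoveComp c c'' (g.trans g')

end Defs

/-! ### Block matrices for ℚ-trivial Bott manifolds -/

/-- Starting (0-based) index of the `s`-th block for the partition `lam`. -/
def blockStart (t : ℕ) (lam : Fin t → ℕ) (s : Fin t) : ℕ :=
  ∑ s' ∈ Finset.univ.filter (fun s' : Fin t => s' < s), lam s'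

/-- The block-diagonal matrix with diagonal blocks `H_{λ_1}, …, H_{λ_t}`, where `H_j`
is the `j × j` strictly lower triangular matrix whose first column below the diagonal
consists of `1`s and whose other entries vanish. -/
def blockMat (n t : ℕ) (lam : Fin t → ℕ) : Mat n := fun i j =>
  if ∃ s : Fin t, (j : ℕ) = blockStart t lam s ∧ blockStart t lam s < (i : ℕ) ∧
      (i : ℕ) < blockStart t lam s + lam s then 1 else 0

/-- `H²(ℋ_{λ_s})`: the subgroup of the degree-2 component spanned by the generators
belonging to the `s`-th block. -/
noncomputable def blockH2 (n t : ℕ) (lam : Fin t → ℕ) (s : Fin t) :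
    Submodule ℤ (BRing n (blockMat n t lam)) :=
  Submodule.span ℤ (bx n (blockMat n t lam) ''
    {i : Fin n | blockStart t lam s ≤ (i : ℕ) ∧ (i : ℕ) < blockStart t lam s + lam s})

end Bott

namespace Bott

set_option linter.dupNamespace false

variable {n : ℕ}

/-- The `ℤ`-linear combination `∑ d_j y_j` in a Bott ring. -/
noncomputable def lin (b : Mat n) (d : Fin n → ℤ) : BRing n b :=
  ∑ j, d j • bx n b j

lemma lin_eq_sum_cast (b : Mat n) (d : Fin n → ℤ) :
    lin b d = ∑ j, (d j : BRing n b) * bx n b j := by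
  simp [lin, zsmul_eq_mul]

lemma bmk_C (b : Mat n) (z : ℤ) : bmk n b (C z) = (z : BRing n b) := by
  simp [bmk]

lemma bal_eq_lin (b : Mat n) (i : Fin n) : bal n b i = lin b (b i) := by
  simp only [bal, alpha, map_sum, map_mul, bmk_C, lin, zsmul_eq_mul]
  rfl

lemma bx_sq (b : Mat n) (i : Fin n) :
    bx n b i ^ 2 = bal n b i * bx n b i := by
  have h : bmk n b (X i ^ 2 - alpha n b i * X i) = 0 :=
    Ideal.Quotient.eq_zero_iff_mem.mpr (Ideal.subset_span ⟨i, rfl⟩)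
  rw [map_sub, map_mul, map_pow, sub_eq_zero] at h
  exact h

lemma slt_zero {b : Mat n} (hb : SLT b) {i j : Fin n} (h : (i : ℕ) ≤ (j : ℕ)) :
    b i j = 0 := by
  by_contra hc
  exact absurd (hb _ _ hc) (by omega)

lemma F_eq_span_range (b : Mat n) (K : ℕ) [DecidablePred fun j : Fin n => (j : ℕ) < K] :
    F n b K = Submodule.span ℤ
      (Set.range fun j : Fin n => if (j : ℕ) < K then bx n b j else 0) := by
  refine le_antisymm (Submodule.span_le.2 ?_) (Submodule.span_le.2 ?_)
  · rintro _ ⟨i, hi, rfl⟩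
    have : bx n b i = (if (i : ℕ) < K then bx n b i else 0) := (if_pos hi).symm
    rw [this]
    exact Submodule.subset_span ⟨i, rfl⟩
  · rintro _ ⟨i, rfl⟩
    show (if (i : ℕ) < K then bx n b i else 0) ∈ (F n b K : Set (BRing n b))
    by_cases hi : (i : ℕ) < K
    · rw [if_pos hi]
      exact Submodule.subset_span ⟨i, hi, rfl⟩
    · rw [if_neg hi]
      exact (F n b K).zero_mem

/-- Extraction of coefficients from membership in `F`. -/
lemma exists_coeffs {b : Mat n} {K : ℕ} {z : BRing n b} (hz : z ∈ F n b K) :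
    ∃ e : Fin n → ℤ, (∀ j : Fin n, K ≤ (j : ℕ) → e j = 0) ∧ z = lin b e := by
  classical
  rw [F_eq_span_range, Submodule.mem_span_range_iff_exists_fun] at hz
  obtain ⟨c, hc⟩ := hz
  refine ⟨fun j => if (j : ℕ) < K then c j else 0, fun j hj => if_neg (by omega), ?_⟩
  rw [lin, ← hc]
  refine Finset.sum_congr rfl fun j _ => ?_
  by_cases hj : (j : ℕ) < K <;> simp [hj]

lemma lin_mem_F {b : Mat n} {K : ℕ} {d : Fin n → ℤ}
    (hd : ∀ j : Fin n, K ≤ (j : ℕ) → d j = 0) : lin b d ∈ F n b K := by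
  refine Submodule.sum_mem _ fun j _ => ?_
  by_cases hj : (j : ℕ) < K
  · exact Submodule.smul_mem _ _ (Submodule.subset_span ⟨j, hj, rfl⟩)
  · rw [hd j (by omega), zero_smul]
    exact Submodule.zero_mem _

/-- Ring homomorphisms out of a Bott ring from compatible assignments. -/
noncomputable def Φ {S : Type} [CommRing S] (b : Mat n) (f : Fin n → S)
    (hf : ∀ i, f i ^ 2 = (∑ j, b i j • f j) * f i) : BRing n b →+* S :=
  Ideal.Quotient.lift _ (eval₂Hom (Int.castRingHom S) f) (by
    intro p hp
    refine Submodule.span_induction ?_ ?_ ?_ ?_ hp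
    · rintro _ ⟨i, rfl⟩
      simp only [map_sub, map_mul, map_pow, eval₂Hom_X', alpha, map_sum, eval₂Hom_C]
      rw [sub_eq_zero]
      have := hf i
      simp only [zsmul_eq_mul] at this
      rw [this]
      norm_num
    · simp
    · intro x y _ _ hx hy
      simp only [coe_eval₂Hom] at hx hy
      simp [hx, hy]
    · intro r x _ hx
      simp only [coe_eval₂Hom] at hx
      simp [smul_eq_mul, hx])

lemma Φ_bx {S : Type} [CommRing S] (b : Mat n) (f : Fin n → S)
    (hf : ∀ i, f i ^ 2 = (∑ j, b i j • f j) * f i) (i : Fin n) :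
    Φ b f hf (bx n b i) = f i := by
  simp [Φ, bx, bmk]

lemma Φ_lin {S : Type} [CommRing S] (b : Mat n) (f : Fin n → S)
    (hf : ∀ i, f i ^ 2 = (∑ j, b i j • f j) * f i) (d : Fin n → ℤ) :
    Φ b f hf (lin b d) = ∑ j, d j • f j := by
  rw [lin, map_sum]
  exact Finset.sum_congr rfl fun j _ => by rw [map_zsmul, Φ_bx]
section W

open TrivSqZeroExt

set_option synthInstance.maxHeartbeats 1000000
set_option maxHeartbeats 1000000

/-- The detection ring `ℚ[ε₁, ε₂]/(ε₁², ε₂²)`. -/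
abbrev W : Type := DualNumber (DualNumber ℚ)

noncomputable def ws : W := inl DualNumber.eps

noncomputable def wt (a : ℤ) : W := inl (((a : ℚ) / 2) • DualNumber.eps) + inr 1

lemma ws_mul_ws : ws * ws = 0 := by
  rw [ws, inl_mul_inl, DualNumber.eps_mul_eps, inl_zero]

lemma ws_mul_wt (a : ℤ) : ws * wt a = inr DualNumber.eps := by
  rw [ws, wt, mul_add, inl_mul_inl, inl_mul_inr]
  rw [mul_smul_comm, DualNumber.eps_mul_eps, smul_zero, inl_zero, zero_add,
    smul_eq_mul, mul_one]

lemma wt_mul_wt (a : ℤ) : wt a * wt a = a • inr DualNumber.eps := by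
  have hc : ((a : ℚ) / 2) • (DualNumber.eps : DualNumber ℚ)
        + ((a : ℚ) / 2) • DualNumber.eps
      = (a : ℤ) • (DualNumber.eps : DualNumber ℚ) := by
    rw [← add_smul, ← Int.cast_smul_eq_zsmul ℚ]
    norm_num
  rw [wt, add_mul, mul_add, mul_add, inl_mul_inl, inl_mul_inr, inr_mul_inl, inr_mul_inr,
    smul_mul_assoc, mul_smul_comm, DualNumber.eps_mul_eps, smul_zero, smul_zero, inl_zero,
    smul_eq_mul, mul_one, op_smul_eq_smul, smul_eq_mul, mul_one, ← inr_smul]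
  rw [zero_add, add_zero, ← inr_add, hc]

lemma smul_inr_eps_eq_zero {z : ℤ} (h : z • (inr DualNumber.eps : W) = 0) : z = 0 := by
  have h1 := congrArg TrivSqZeroExt.snd h
  rw [snd_smul, snd_inr, snd_zero] at h1
  have h2 := congrArg TrivSqZeroExt.snd h1
  rw [snd_smul, DualNumber.eps, snd_inr, snd_zero] at h2
  simpa using h2

end W
section Coeff

open TrivSqZeroExt

set_option synthInstance.maxHeartbeats 1000000
set_option maxHeartbeats 1000000

/-- If a combination of the generators `y_j` with `j < M` kills `y_M`, all its
coefficients vanish. -/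
lemma coeff_zero {b : Mat n} (hb : SLT b) (M : Fin n) (d : Fin n → ℤ)
    (hd : ∀ j : Fin n, (M : ℕ) ≤ (j : ℕ) → d j = 0)
    (h : lin b d * bx n b M = 0) : ∀ j : Fin n, d j = 0 := by
  intro j
  by_cases hjM : (M : ℕ) ≤ (j : ℕ)
  · exact hd j hjM
  push_neg at hjM
  have hjne : j ≠ M := fun hc => by rw [hc] at hjM; omega
  classical
  set f : Fin n → W := fun i => if i = j then ws else if i = M then wt (b M j) else 0 with hfdef
  have hfj : f j = ws := by rw [hfdef]; exact if_pos rfl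
  have hfM : f M = wt (b M j) := by
    rw [hfdef]
    dsimp only
    rw [if_neg hjne.symm, if_pos rfl]
  have hf0 : ∀ i, i ≠ j → i ≠ M → f i = 0 := by
    intro i h1 h2
    rw [hfdef]
    dsimp only
    rw [if_neg h1, if_neg h2]
  have hsum : ∀ g : Fin n → ℤ, (∑ i, g i • f i) = g j • ws + g M • wt (b M j) := by
    intro g
    rw [← hfj, ← hfM, ← Finset.sum_pair (f := fun x => g x • f x) hjne]
    refine (Finset.sum_subset (Finset.subset_univ _) ?_).symm
    intro x _ hx
    simp only [Finset.mem_insert, Finset.mem_singleton, not_or] at hx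
    rw [hf0 x hx.1 hx.2, smul_zero]
  have hf : ∀ i, f i ^ 2 = (∑ j', b i j' • f j') * f i := by
    intro i
    rw [hsum]
    rcases eq_or_ne i j with rfl | hij
    · rw [hfj, slt_zero hb (le_refl _), slt_zero hb (le_of_lt hjM), zero_smul, zero_smul,
        add_zero, zero_mul, sq, ws_mul_ws]
    rcases eq_or_ne i M with rfl | hiM
    · rw [hfM, slt_zero hb (le_refl _), zero_smul, add_zero, sq, wt_mul_wt, smul_mul_assoc,
        ws_mul_wt]
    · rw [hf0 i hij hiM, sq, mul_zero, mul_zero]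
  have h0 := congrArg (Φ b f hf) h
  rw [map_mul, Φ_lin, Φ_bx, map_zero, hfM] at h0
  have hsum2 := hsum d
  rw [hd M (le_refl _), zero_smul, add_zero] at hsum2
  rw [hsum2, smul_mul_assoc, ws_mul_wt] at h0
  exact smul_inr_eps_eq_zero h0

/-- The retraction of the Bott ring killing the generators `y_j`, `j ≥ M`. -/
noncomputable def killHom (b : Mat n) (hb : SLT b) (M : ℕ) : BRing n b →+* BRing n b :=
  Φ b (fun i => if (i : ℕ) < M then bx n b i else 0) (by
    intro i
    by_cases hi : (i : ℕ) < M
    · rw [if_pos hi]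
      have : (∑ j, b i j • if (j : ℕ) < M then bx n b j else 0) = bal n b i := by
        rw [bal_eq_lin, lin]
        refine Finset.sum_congr rfl fun j _ => ?_
        by_cases hj : (j : ℕ) < M
        · rw [if_pos hj]
        · rw [if_neg hj, slt_zero hb (by omega), zero_smul, zero_smul]
      rw [this, bx_sq]
    · rw [if_neg hi, sq, mul_zero, mul_zero])

lemma killHom_lin (b : Mat n) (hb : SLT b) (M : ℕ) (d : Fin n → ℤ)
    (hd : ∀ j : Fin n, M ≤ (j : ℕ) → d j = 0) :
    killHom b hb M (lin b d) = lin b d := by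
  rw [killHom, Φ_lin, lin]
  refine Finset.sum_congr rfl fun j _ => ?_
  by_cases hj : (j : ℕ) < M
  · rw [if_pos hj]
  · rw [hd j (by omega), zero_smul, zero_smul]

lemma killHom_bx_self (b : Mat n) (hb : SLT b) (M : Fin n) :
    killHom b hb (M : ℕ) (bx n b M) = 0 := by
  rw [killHom, Φ_bx, if_neg (lt_irrefl _)]

end Coeff
section Core

/-- The core expansion step: from a quadratic relation `u² = γu` with `u` supported in
degrees `≤ M` and `γ` supported in degrees `< M`, extract the coefficient identities and
the truncated relation. -/
lemma core {b : Mat n} (hb : SLT b) (M : Fin n) (e g : Fin n → ℤ)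
    (he : ∀ j : Fin n, (M : ℕ) < (j : ℕ) → e j = 0)
    (hg : ∀ j : Fin n, (M : ℕ) ≤ (j : ℕ) → g j = 0)
    (heq : lin b e * lin b e = lin b g * lin b e) :
    (∀ j : Fin n, e M * (e M * b M j + 2 * (if j = M then 0 else e j) - g j) = 0) ∧
      lin b (fun j => if j = M then 0 else e j) * lin b (fun j => if j = M then 0 else e j)
        = lin b g * lin b (fun j => if j = M then 0 else e j) := by
  classical
  set c : ℤ := e M with hc
  set e' : Fin n → ℤ := fun j => if j = M then 0 else e j with he'def
  have he' : ∀ j : Fin n, (M : ℕ) ≤ (j : ℕ) → e' j = 0 := by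
    intro j hj
    rw [he'def]
    dsimp only
    rcases eq_or_ne j M with rfl | hne
    · rw [if_pos rfl]
    · rw [if_neg hne]
      exact he j (lt_of_le_of_ne hj fun h => hne (Fin.ext h.symm))
  set d : Fin n → ℤ := fun j => c * c * b M j + 2 * c * e' j - c * g j with hddef
  have hd : ∀ j : Fin n, (M : ℕ) ≤ (j : ℕ) → d j = 0 := by
    intro j hj
    rw [hddef]
    dsimp only
    rw [slt_zero hb hj, he' j hj, hg j hj]
    ring
  -- split `lin b e` as `c • y_M + lin b e'`
  have hsplit : lin b e = (c : BRing n b) * bx n b M + lin b e' := by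
    rw [lin_eq_sum_cast, lin_eq_sum_cast, ← Finset.sum_add_sum_compl {M}]
    congr 1
    · rw [Finset.sum_singleton]
    · rw [eq_comm, ← Finset.sum_add_sum_compl {M}, Finset.sum_singleton, he'def]
      dsimp only
      rw [if_pos rfl]
      push_cast
      rw [zero_mul, zero_add]
      refine Finset.sum_congr rfl fun j hj => ?_
      rw [if_neg (by simpa using hj)]
  have hlind : lin b d = (c : BRing n b) * ((c : BRing n b) * bal n b M)
      + 2 * (c : BRing n b) * lin b e' - (c : BRing n b) * lin b g := by
    rw [bal_eq_lin, lin_eq_sum_cast, lin_eq_sum_cast, lin_eq_sum_cast, lin_eq_sum_cast,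
      Finset.mul_sum, Finset.mul_sum, Finset.mul_sum, Finset.mul_sum,
      ← Finset.sum_add_distrib, ← Finset.sum_sub_distrib]
    refine Finset.sum_congr rfl fun j _ => ?_
    rw [hddef]
    push_cast
    ring
  have hy : bx n b M * bx n b M = bal n b M * bx n b M := by
    rw [← sq, bx_sq]
  have key : lin b d * bx n b M + (lin b e' * lin b e' - lin b g * lin b e') = 0 := by
    rw [hsplit] at heq
    rw [hlind]
    linear_combination heq - (c : BRing n b) * (c : BRing n b) * hy
  -- apply the retraction killing `y_M` to get the second conjunct
  have h2 : lin b e' * lin b e' - lin b g * lin b e' = 0 := by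
    have := congrArg (killHom b hb (M : ℕ)) key
    rw [map_add, map_mul, map_zero, killHom_bx_self, mul_zero, zero_add, map_sub, map_mul,
      map_mul, killHom_lin b hb _ e' he', killHom_lin b hb _ g hg] at this
    exact this
  have h1 : lin b d * bx n b M = 0 := by
    rw [h2, add_zero] at key
    exact key
  have hdz := coeff_zero hb M d hd h1
  refine ⟨fun j => ?_, sub_eq_zero.mp h2⟩
  have := hdz j
  rw [hddef] at this
  dsimp only at this
  rw [he'def] at this
  dsimp only at this
  rcases eq_or_ne j M with rfl | hne
  · rw [if_pos rfl, slt_zero hb (le_refl _), hg j (le_refl _)]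
    ring
  · rw [if_neg hne] at this ⊢
    linarith [this]

end Core
set_option maxHeartbeats 2000000 in
/-- Let `φ : R_A → R_B` be a `k`-stable graded ring isomorphism,
`ℓ := ht(φ(x_{k+1})) > k + 1`, and assume `p := b_{ℓ,ℓ−1}` is even.  Then
`v := (p/2) y_{ℓ−1}` lies in `F_{ℓ−1}(B)` and satisfies `v(β_ℓ − v) = 0` in `R_B`. -/
theorem stmt_12 (n k : ℕ) (hk : k < n) (a b : Mat n) (ha : SLT a) (hb : SLT b)
    (φ : BRing n a ≃+* BRing n b) (hφ : IsGraded n a b φ) (hst : IsStable n a b k φ)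
    (l : ℕ) (hl : l = ht n b (φ (bx n a ⟨k, hk⟩))) (hlk : k + 1 < l) (hln : l ≤ n)
    (hp : Even (b ⟨l - 1, by omega⟩ ⟨l - 2, by omega⟩)) :
    (b ⟨l - 1, by omega⟩ ⟨l - 2, by omega⟩ / 2) • bx n b ⟨l - 2, by omega⟩
        ∈ F n b (l - 1) ∧
    ((b ⟨l - 1, by omega⟩ ⟨l - 2, by omega⟩ / 2) • bx n b ⟨l - 2, by omega⟩) *
        (bal n b ⟨l - 1, by omega⟩ -
          (b ⟨l - 1, by omega⟩ ⟨l - 2, by omega⟩ / 2) • bx n b ⟨l - 2, by omega⟩) = 0 := by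
  classical
  have hMlt : l - 1 < n := by omega
  have hmlt : l - 2 < n := by omega
  set M : Fin n := ⟨l - 1, hMlt⟩ with hMdef
  set m : Fin n := ⟨l - 2, hmlt⟩ with hmdef
  have hmM : m ≠ M := by
    intro h
    have h2 : l - 2 = l - 1 := congrArg Fin.val h
    omega
  set u := φ (bx n a ⟨k, hk⟩) with hu
  -- u ∈ F_ℓ(B), u ∉ F_{ℓ-1}(B)
  have huH2 : u ∈ H2 n b := hφ.1 _ (Submodule.subset_span ⟨⟨k, hk⟩, rfl⟩)
  have huFn : u ∈ F n b n :=
    Submodule.span_mono (by rintro _ ⟨i, rfl⟩; exact ⟨i, i.isLt, rfl⟩) huH2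
  have hul : u ∈ F n b l := by
    rw [hl, ht]
    exact Nat.sInf_mem (⟨n, huFn⟩ : Set.Nonempty {K | u ∈ F n b K})
  have hunl : u ∉ F n b (l - 1) := by
    intro hmem
    have h1 : ht n b u ≤ l - 1 := Nat.sInf_le hmem
    omega
  -- coefficients of u and of γ := φ(α_{k+1})
  obtain ⟨e, hes, hue⟩ := exists_coeffs hul
  have hbalmem : bal n a ⟨k, hk⟩ ∈ F n a k := by
    rw [bal_eq_lin]
    exact lin_mem_F fun j hj => slt_zero ha hj
  obtain ⟨g, hgs, hge⟩ := exists_coeffs (hst _ hbalmem)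
  -- the quadratic relation
  have heq : lin b e * lin b e = lin b g * lin b e := by
    have hxx : u * u = φ (bal n a ⟨k, hk⟩) * u := by
      rw [hu, ← map_mul, ← map_mul, ← sq, bx_sq]
    rw [hue, hge] at hxx
    exact hxx
  -- first application of `core`, at level `M = ℓ-1`
  have he1 : ∀ j : Fin n, (M : ℕ) < (j : ℕ) → e j = 0 := by
    intro j hj
    have hj' : l - 1 < (j : ℕ) := hj
    exact hes j (by omega)
  have hg1 : ∀ j : Fin n, (M : ℕ) ≤ (j : ℕ) → g j = 0 := by
    intro j hj
    have hj' : l - 1 ≤ (j : ℕ) := hj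
    exact hgs j (by omega)
  obtain ⟨h1c, h1e⟩ := core hb M e g he1 hg1 heq
  -- second application of `core`, at level `m = ℓ-2`
  have he2 : ∀ j : Fin n, (m : ℕ) < (j : ℕ) → (if j = M then 0 else e j) = 0 := by
    intro j hj
    have hj' : l - 2 < (j : ℕ) := hj
    rcases eq_or_ne j M with rfl | hne
    · rw [if_pos rfl]
    · rw [if_neg hne]
      have hjv : (j : ℕ) ≠ l - 1 := fun hh => hne (Fin.ext hh)
      exact hes j (by omega)
  have hg2 : ∀ j : Fin n, (m : ℕ) ≤ (j : ℕ) → g j = 0 := by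
    intro j hj
    have hj' : l - 2 ≤ (j : ℕ) := hj
    exact hgs j (by omega)
  obtain ⟨h2c, h2e⟩ := core hb m (fun j => if j = M then 0 else e j) g he2 hg2 h1e
  -- the leading coefficient of u is nonzero
  have hcne : e M ≠ 0 := by
    intro h0
    apply hunl
    have hrep : u = lin b fun j => if j = M then 0 else e j := by
      rw [hue, lin, lin]
      refine Finset.sum_congr rfl fun j _ => ?_
      rcases eq_or_ne j M with rfl | hne
      · rw [if_pos rfl, h0]
      · rw [if_neg hne]
    rw [hrep]
    refine lin_mem_F fun j hj => ?_
    rcases eq_or_ne j M with rfl | hne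
    · rw [if_pos rfl]
    · rw [if_neg hne]
      have hjv : (j : ℕ) ≠ l - 1 := fun hh => hne (Fin.ext hh)
      exact hes j (by omega)
  obtain ⟨r, hr⟩ := hp
  have hbMm : b M m = b ⟨l - 1, by omega⟩ ⟨l - 2, by omega⟩ := rfl
  have hpr : b M m / 2 = r := by rw [hbMm, hr]; omega
  show ((b M m / 2) • bx n b m ∈ F n b (l - 1)) ∧
      ((b M m / 2) • bx n b m) * (bal n b M - (b M m / 2) • bx n b m) = 0
  refine ⟨Submodule.smul_mem _ _ (Submodule.subset_span ⟨m, show l - 2 < l - 1 by omega, rfl⟩), ?_⟩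
  rw [hpr]
  rcases eq_or_ne r 0 with rfl | hrne
  · rw [zero_smul, zero_mul]
  -- the coefficient `w_m` of `y_m` in `u - c y_M`
  have hgm : g m = 0 := hg2 m (le_refl _)
  have hwm : e m = -(e M * r) := by
    have h5 := h1c m
    rw [if_neg hmM, hgm] at h5
    have h6 : e M * b M m + 2 * e m - 0 = 0 := (mul_eq_zero.mp h5).resolve_left hcne
    have h7 : b M m = r + r := hr
    have h8 : e M * (r + r) + 2 * e m = 0 := by rw [← h7]; linarith
    linarith
  have hwmne : (if m = M then 0 else e m) ≠ 0 := by
    rw [if_neg hmM, hwm]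
    exact neg_ne_zero.mpr (mul_ne_zero hcne hrne)
  -- the matrix identity `b_{Mj} = -r b_{mj} + 2r δ_{jm}`
  have hB : ∀ j : Fin n, b M j = -r * b m j + (if j = m then 2 * r else 0) := by
    intro j
    have hA : e M * b M j + 2 * (if j = M then 0 else e j) - g j = 0 :=
      (mul_eq_zero.mp (h1c j)).resolve_left hcne
    have hBj : (if m = M then 0 else e m) * b m j
        + 2 * (if j = m then 0 else if j = M then 0 else e j) - g j = 0 :=
      (mul_eq_zero.mp (h2c j)).resolve_left hwmne
    rw [if_neg hmM, hwm] at hBj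
    rcases eq_or_ne j m with rfl | hjm
    · rw [if_pos rfl] at hBj ⊢
      rw [if_neg hmM, hwm] at hA
      have hbmm : b m m = 0 := slt_zero hb (le_refl _)
      rw [hbmm] at hBj ⊢
      have : e M * b M m + 2 * -(e M * r) - g m = 0 := hA
      have h9 : e M * (b M m - 2 * r) = 0 := by rw [hgm] at this; linarith
      have h10 : b M m - 2 * r = 0 := (mul_eq_zero.mp h9).resolve_left hcne
      linarith
    · rw [if_neg hjm] at hBj ⊢
      have h11 : e M * b M j - -(e M * r) * b m j = 0 := by linarith
      have h12 : e M * (b M j + r * b m j) = 0 := by linarith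
      have h13 : b M j + r * b m j = 0 := (mul_eq_zero.mp h12).resolve_left hcne
      linarith
  -- rewrite β_M and conclude
  have hbalM : bal n b M = (-r) • bal n b m + (2 * r) • bx n b m := by
    rw [bal_eq_lin, bal_eq_lin, lin, lin, Finset.smul_sum]
    have hsingle : ∑ j, (if j = m then (2 * r : ℤ) else 0) • bx n b j
        = (2 * r) • bx n b m := by
      simp [ite_smul]
    rw [← hsingle, ← Finset.sum_add_distrib]
    refine Finset.sum_congr rfl fun j _ => ?_
    rw [hB j, smul_smul, ← add_smul]
  rw [hbalM]
  have hym : bx n b m * bx n b m = bal n b m * bx n b m := by rw [← sq, bx_sq]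
  simp only [zsmul_eq_mul]
  push_cast
  linear_combination ((r : BRing n b) * (r : BRing n b)) * hym
end Bott
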